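/- (Parities of the crossings in a Reidemeister III configuration, first connectivity.) Let i, j, k be distinct labels and let G = P ++ [(i,u,+), (j,u,+)] ++ Q ++ [(i,o,+), (k,u,+)] ++ R ++ [(j,o,+), (k,o,+)] ++ S be a signed Gauss code in which the labels i, j, k occur only in the three displayed adjacent pairs. Then the sum of the parities of the crossings i, j, and k is even; equivalently, either all three of i, j, k are even crossings, or exactly two of them are odd and one is even. -/
import Mathlib


/-- The marker recording whether an entry of a Gauss code lies on the
understrand (`u`) or overstrand (`o`) of the crossing. -/
inductive Strand : Type
  | u : Strand
  | o : Strand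
deriving DecidableEq

/-- The sign of a crossing. -/
inductive GSign : Type
  | pos : GSign
  | neg : GSign
deriving DecidableEq

/-- An entry `(ℓ, m, ε)` of a signed Gauss code: a label, a strand marker, and a sign.
A signed Gauss code is a `List (GaussEntry L)`. -/
abbrev GaussEntry (L : Type u) : Type u := L × Strand × GSign

/-- A label `ℓ` is a crossing of the signed Gauss code `G` if it occurs in exactly two
entries of `G`, once with marker `u` and once with marker `o`, both with the same sign. -/
def IsCrossing {L : Type u} [DecidableEq L] (G : List (GaussEntry L)) (ℓ : L) : Prop :=
  G.countP (fun e => decide (e.1 = ℓ)) = 2 ∧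
  ∃ ε : GSign, (ℓ, Strand.u, ε) ∈ G ∧ (ℓ, Strand.o, ε) ∈ G

/-- The number of entries of `G` lying strictly between the two occurrences of the
label `ℓ` (for `ℓ` occurring exactly twice in `G`). -/
def betweenCount {L : Type u} [DecidableEq L] (G : List (GaussEntry L)) (ℓ : L) : ℕ :=
  (G.drop (G.findIdx (fun e => decide (e.1 = ℓ)) + 1)).findIdx (fun e => decide (e.1 = ℓ))

/-- The parity of the crossing `ℓ` in `G`: the residue mod 2 of the number of entries of
`G` lying strictly between the two occurrences of `ℓ` (`0` = even, `1` = odd). -/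
def crossingParity {L : Type u} [DecidableEq L] (G : List (GaussEntry L)) (ℓ : L) : ℕ :=
  betweenCount G ℓ % 2

private lemma findIdx_append_of_neg {α : Type*} (p : α → Bool) {A : List α}
    (h : ∀ e ∈ A, p e = false) (l : List α) :
    (A ++ l).findIdx p = A.length + l.findIdx p := by
  induction A with
  | nil => simp
  | cons a t ih =>
    simp only [List.cons_append, List.findIdx_cons, h a (by simp), cond_false]
    rw [ih (fun e he => h e (by simp [he]))]
    simp [Nat.succ_add]

private lemma betweenCount_eq {L : Type*} [DecidableEq L] (A B C : List (GaussEntry L))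
    (ℓ : L) (x y : GaussEntry L) (hA : ∀ e ∈ A, e.1 ≠ ℓ) (hB : ∀ e ∈ B, e.1 ≠ ℓ)
    (hx : x.1 = ℓ) (hy : y.1 = ℓ) :
    betweenCount (A ++ x :: (B ++ y :: C)) ℓ = B.length := by
  unfold betweenCount
  have h1 : (A ++ x :: (B ++ y :: C)).findIdx (fun e => decide (e.1 = ℓ)) = A.length := by
    rw [findIdx_append_of_neg _ (fun e he => by simp [hA e he])]
    simp [List.findIdx_cons, hx]
  rw [h1]
  have h2 : A ++ x :: (B ++ y :: C) = (A ++ [x]) ++ (B ++ y :: C) := by simp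
  rw [h2, List.drop_left' (by simp)]
  rw [findIdx_append_of_neg _ (fun e he => by simp [hB e he])]
  simp [List.findIdx_cons, hy]

/-- (Parities of the crossings in a Reidemeister III configuration, first
connectivity.) In `G = P ++ [iᵤ⁺, jᵤ⁺] ++ Q ++ [iₒ⁺, kᵤ⁺] ++ R ++ [jₒ⁺, kₒ⁺] ++ S`
(with `i, j, k` distinct and occurring only in the displayed pairs), the sum of the
parities of the crossings `i`, `j`, `k` is even: either all three are even, or exactly
two are odd and one is even. -/
theorem reidemeister_III_first_connectivity_parity_sum_even {L : Type*} [DecidableEq L]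
    (P Q R S : List (GaussEntry L)) (i j k : L)
    (hij : i ≠ j) (hik : i ≠ k) (hjk : j ≠ k)
    (hfresh : ∀ e ∈ P ++ Q ++ R ++ S, e.1 ≠ i ∧ e.1 ≠ j ∧ e.1 ≠ k)
    (G : List (GaussEntry L))
    (hG : G = P ++ [(i, Strand.u, GSign.pos), (j, Strand.u, GSign.pos)] ++ Q
            ++ [(i, Strand.o, GSign.pos), (k, Strand.u, GSign.pos)] ++ R
            ++ [(j, Strand.o, GSign.pos), (k, Strand.o, GSign.pos)] ++ S) :
    (crossingParity G i + crossingParity G j + crossingParity G k) % 2 = 0 := by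
  have hP : ∀ e ∈ P, e.1 ≠ i ∧ e.1 ≠ j ∧ e.1 ≠ k := fun e he => hfresh e (by simp [he])
  have hQ : ∀ e ∈ Q, e.1 ≠ i ∧ e.1 ≠ j ∧ e.1 ≠ k := fun e he => hfresh e (by simp [he])
  have hR : ∀ e ∈ R, e.1 ≠ i ∧ e.1 ≠ j ∧ e.1 ≠ k := fun e he => hfresh e (by simp [he])
  have hbi : betweenCount G i = ((j, Strand.u, GSign.pos) :: Q).length := by
    have hGi : G = P ++ (i, Strand.u, GSign.pos) ::
        (((j, Strand.u, GSign.pos) :: Q) ++ (i, Strand.o, GSign.pos) ::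
          ((k, Strand.u, GSign.pos) :: (R ++ (j, Strand.o, GSign.pos) ::
            (k, Strand.o, GSign.pos) :: S))) := by simp [hG]
    rw [hGi]
    refine betweenCount_eq _ _ _ _ _ _ (fun e he => (hP e he).1) ?_ rfl rfl
    intro e he
    rcases List.mem_cons.1 he with rfl | he
    · exact hij.symm
    · exact (hQ e he).1
  have hbj : betweenCount G j =
      (Q ++ (i, Strand.o, GSign.pos) :: (k, Strand.u, GSign.pos) :: R).length := by
    have hGj : G = (P ++ [(i, Strand.u, GSign.pos)]) ++ (j, Strand.u, GSign.pos) ::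
        ((Q ++ (i, Strand.o, GSign.pos) :: (k, Strand.u, GSign.pos) :: R) ++
          (j, Strand.o, GSign.pos) :: ((k, Strand.o, GSign.pos) :: S)) := by simp [hG]
    rw [hGj]
    refine betweenCount_eq _ _ _ _ _ _ ?_ ?_ rfl rfl
    · intro e he
      rcases List.mem_append.1 he with he | he
      · exact (hP e he).2.1
      · rcases List.mem_singleton.1 he with rfl
        exact hij
    · intro e he
      rcases List.mem_append.1 he with he | he
      · exact (hQ e he).2.1
      · rcases List.mem_cons.1 he with rfl | he
        · exact hij
        · rcases List.mem_cons.1 he with rfl | he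
          · exact hjk.symm
          · exact (hR e he).2.1
  have hbk : betweenCount G k = (R ++ [(j, Strand.o, GSign.pos)]).length := by
    have hGk : G = (P ++ (i, Strand.u, GSign.pos) :: (j, Strand.u, GSign.pos) ::
        (Q ++ [(i, Strand.o, GSign.pos)])) ++ (k, Strand.u, GSign.pos) ::
        ((R ++ [(j, Strand.o, GSign.pos)]) ++ (k, Strand.o, GSign.pos) :: S) := by simp [hG]
    rw [hGk]
    refine betweenCount_eq _ _ _ _ _ _ ?_ ?_ rfl rfl
    · intro e he
      rcases List.mem_append.1 he with he | he
      · exact (hP e he).2.2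
      · rcases List.mem_cons.1 he with rfl | he
        · exact hik
        · rcases List.mem_cons.1 he with rfl | he
          · exact hjk
          · rcases List.mem_append.1 he with he | he
            · exact (hQ e he).2.2
            · rcases List.mem_singleton.1 he with rfl
              exact hik
    · intro e he
      rcases List.mem_append.1 he with he | he
      · exact (hR e he).2.2
      · rcases List.mem_singleton.1 he with rfl
        exact hjk
  simp only [crossingParity, hbi, hbj, hbk, List.length_cons, List.length_append,
    List.length_nil]
  omega
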